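/- arXiv:1405.1211 — 2 statements merged into one kernel-verified Lean document; each statement's English description precedes it below -/
import Mathlib

section
/- Let Ω ⊆ ℝⁿ be open, let F : ℝ × Ω → ℝ be C², and suppose that for each t the map ξ ↦ ∇_ξ F(t, ξ) is a bijection from Ω onto an open set P ⊆ ℝⁿ, with inverse x ↦ ξ(t, x) jointly C¹, and that Hess_ξ F(t, ξ) is invertible for all (t, ξ). Define u(t, x) = ⟨x, ξ(t,x)⟩ − F(t, ξ(t,x)) on ℝ × P. Then for all (t, x) ∈ ℝ × P, writing ξ = ξ(t,x), one has −∂²u/∂t²(t, x) = ∂²F/∂t²(t, ξ) − ⟨(Hess_ξ F(t, ξ))⁻¹ ∇_ξ(∂F/∂t)(t, ξ), ∇_ξ(∂F/∂t)(t, ξ)⟩. -/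
open Set Matrix

/-- The Hessian matrix of `f : ℝⁿ → ℝ` at a point. -/
noncomputable def hessMat {n : ℕ} (f : EuclideanSpace ℝ (Fin n) → ℝ)
    (y : EuclideanSpace ℝ (Fin n)) : Matrix (Fin n) (Fin n) ℝ :=
  fun i j => fderiv ℝ (fun z => gradient f z) y (EuclideanSpace.single j 1) i

/-!
Write `B` for the second derivative of `(s, z) ↦ F s z` at `(t, ξ(t, x))`, a symmetric bilinear
form on `ℝ × ℝⁿ`, and `w = ∂ₜξ(t, x)`. By the envelope theorem `∂ₜu(s, x) = -∂ₜF(s, ξ(s, x))`,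
so `-∂²ₜu(t, x) = B((1, w), (1, 0)) = ∂²ₜF + B((0, w), (1, 0))`. Differentiating the identity
`∇F(s, ξ(s, x)) = x` in `s` gives `B((1, w), (0, v)) = 0` for every `v`, that is
`Hess F · w = -∇(∂ₜF)`. Substituting `w = -(Hess F)⁻¹ ∇(∂ₜF)` turns `B((0, w), (1, 0)) = ⟨w, ∇(∂ₜF)⟩`
into the Schur complement term.
-/

open Filter Topology ContinuousLinearMap Function

section Slices

variable {E X : Type*} [NormedAddCommGroup E] [NormedSpace ℝ E]
  [NormedAddCommGroup X] [NormedSpace ℝ X]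

theorem HasFDerivAt.hasDerivAt_comp_prodMk {φ : ℝ × E → X} {L : ℝ × E →L[ℝ] X}
    {c : ℝ → E} {c' : E} {s : ℝ} (hφ : HasFDerivAt φ L (s, c s)) (hc : HasDerivAt c c' s) :
    HasDerivAt (fun r => φ (r, c r)) (L (1, c')) s :=
  hφ.comp_hasDerivAt s ((hasDerivAt_id s).prodMk hc)

variable {F : ℝ → E → X} {s : ℝ} {z : E}

theorem DifferentiableAt.deriv_slice_fst (hF : DifferentiableAt ℝ (uncurry F) (s, z)) :
    deriv (fun r => F r z) s = fderiv ℝ (uncurry F) (s, z) (1, 0) :=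
  (hF.hasFDerivAt.hasDerivAt_comp_prodMk (c := fun _ => z) (hasDerivAt_const s z)).deriv

theorem DifferentiableAt.fderiv_slice_snd (hF : DifferentiableAt ℝ (uncurry F) (s, z)) :
    fderiv ℝ (F s) z = (fderiv ℝ (uncurry F) (s, z)).comp (inr ℝ ℝ E) :=
  (hF.hasFDerivAt.comp z (hasFDerivAt_prodMk_right s z)).fderiv

end Slices

section SecondDerivatives

variable {E : Type*} [NormedAddCommGroup E] [NormedSpace ℝ E]
  {F : ℝ → E → ℝ} {B : ℝ × E →L[ℝ] ℝ × E →L[ℝ] ℝ} {t : ℝ} {y : E}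

theorem hasDerivAt_deriv_slice_fst (hF : ∀ᶠ s in 𝓝 t, DifferentiableAt ℝ (uncurry F) (s, y))
    (hB : HasFDerivAt (fderiv ℝ (uncurry F)) B (t, y)) :
    HasDerivAt (fun s => deriv (fun r => F r y) s) (B (1, 0) (1, 0)) t := by
  have h := (hB.hasDerivAt_comp_prodMk (c := fun _ => y) (hasDerivAt_const t y)).clm_apply
    (hasDerivAt_const t ((1, 0) : ℝ × E))
  rw [map_zero, add_zero] at h
  refine h.congr_of_eventuallyEq ?_
  filter_upwards [hF] with s hs using hs.deriv_slice_fst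

theorem hasFDerivAt_deriv_slice_fst (hF : ∀ᶠ z in 𝓝 y, DifferentiableAt ℝ (uncurry F) (t, z))
    (hB : HasFDerivAt (fderiv ℝ (uncurry F)) B (t, y)) :
    HasFDerivAt (fun z => deriv (fun s => F s z) t)
      ((apply ℝ ℝ ((1, 0) : ℝ × E)).comp (B.comp (inr ℝ ℝ E))) y := by
  have h := (apply ℝ ℝ ((1, 0) : ℝ × E)).hasFDerivAt.comp y
    (hB.comp y (hasFDerivAt_prodMk_right t y))
  refine h.congr_of_eventuallyEq ?_
  filter_upwards [hF] with z hz using hz.deriv_slice_fst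

theorem hasFDerivAt_fderiv_slice_snd (hF : ∀ᶠ z in 𝓝 y, DifferentiableAt ℝ (uncurry F) (t, z))
    (hB : HasFDerivAt (fderiv ℝ (uncurry F)) B (t, y)) :
    HasFDerivAt (fderiv ℝ (F t))
      (((compL ℝ E (ℝ × E) ℝ).flip (inr ℝ ℝ E)).comp (B.comp (inr ℝ ℝ E))) y := by
  have h := ((compL ℝ E (ℝ × E) ℝ).flip (inr ℝ ℝ E)).hasFDerivAt.comp y
    (hB.comp y (hasFDerivAt_prodMk_right t y))
  refine h.congr_of_eventuallyEq ?_
  filter_upwards [hF] with z hz using hz.fderiv_slice_snd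

end SecondDerivatives

section Euclidean

variable {ι : Type*} [Fintype ι] [DecidableEq ι]

theorem EuclideanSpace.toDual_symm_apply_apply (L : StrongDual ℝ (EuclideanSpace ℝ ι)) (i : ι) :
    (InnerProductSpace.toDual ℝ (EuclideanSpace ℝ ι)).symm L i = L (EuclideanSpace.single i 1) := by
  rw [← InnerProductSpace.toDual_symm_apply, EuclideanSpace.inner_single_right, one_mul]
  rfl

theorem EuclideanSpace.gradient_apply (f : EuclideanSpace ℝ ι → ℝ) (x : EuclideanSpace ℝ ι)
    (i : ι) : gradient f x i = fderiv ℝ f x (EuclideanSpace.single i 1) :=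
  EuclideanSpace.toDual_symm_apply_apply _ i

theorem EuclideanSpace.map_eq_sum {X : Type*} [AddCommGroup X] [Module ℝ X]
    (L : EuclideanSpace ℝ ι →ₗ[ℝ] X) (w : EuclideanSpace ℝ ι) :
    L w = ∑ i, w i • L (EuclideanSpace.single i 1) := by
  conv_lhs => rw [← (EuclideanSpace.basisFun ι ℝ).sum_repr w]
  simp

theorem gradient_deriv_slice_fst_apply {F : ℝ → EuclideanSpace ℝ ι → ℝ}
    {B : ℝ × EuclideanSpace ℝ ι →L[ℝ] ℝ × EuclideanSpace ℝ ι →L[ℝ] ℝ} {t : ℝ}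
    {y : EuclideanSpace ℝ ι} (hF : ∀ᶠ z in 𝓝 y, DifferentiableAt ℝ (uncurry F) (t, z))
    (hB : HasFDerivAt (fderiv ℝ (uncurry F)) B (t, y)) (i : ι) :
    gradient (fun z => deriv (fun s => F s z) t) y i = B (0, EuclideanSpace.single i 1) (1, 0) := by
  rw [EuclideanSpace.gradient_apply, (hasFDerivAt_deriv_slice_fst hF hB).fderiv]
  rfl

end Euclidean

section Hessian

variable {n : ℕ}

theorem hessMat_apply (f : EuclideanSpace ℝ (Fin n) → ℝ) (y : EuclideanSpace ℝ (Fin n))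
    (i j : Fin n) :
    hessMat f y i j =
      fderiv ℝ (fderiv ℝ f) y (EuclideanSpace.single j 1) (EuclideanSpace.single i 1) := by
  have hgrad : (fun z => gradient f z) =
      (InnerProductSpace.toDual ℝ (EuclideanSpace ℝ (Fin n))).symm ∘ fderiv ℝ f := rfl
  rw [hessMat, hgrad, LinearIsometryEquiv.comp_fderiv]
  exact EuclideanSpace.toDual_symm_apply_apply _ i

theorem hessMat_slice_snd {F : ℝ → EuclideanSpace ℝ (Fin n) → ℝ}
    {B : ℝ × EuclideanSpace ℝ (Fin n) →L[ℝ] ℝ × EuclideanSpace ℝ (Fin n) →L[ℝ] ℝ} {t : ℝ}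
    {y : EuclideanSpace ℝ (Fin n)} (hF : ∀ᶠ z in 𝓝 y, DifferentiableAt ℝ (uncurry F) (t, z))
    (hB : HasFDerivAt (fderiv ℝ (uncurry F)) B (t, y)) :
    hessMat (F t) y =
      of fun i j => B (0, EuclideanSpace.single j 1) (0, EuclideanSpace.single i 1) := by
  ext i j
  rw [hessMat_apply, (hasFDerivAt_fderiv_slice_snd hF hB).fderiv]
  rfl

end Hessian

section Legendre

variable {E : Type*} [NormedAddCommGroup E] [InnerProductSpace ℝ E] [CompleteSpace E]
  {F : ℝ → E → ℝ} {c : ℝ → E} {x c' : E} {s : ℝ}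

theorem fderiv_uncurry_apply_inr_of_gradient_eq (hF : DifferentiableAt ℝ (uncurry F) (s, c s))
    (hgrad : gradient (F s) (c s) = x) (v : E) :
    fderiv ℝ (uncurry F) (s, c s) (0, v) = inner ℝ x v := by
  rw [← hgrad, inner_gradient_left, hF.fderiv_slice_snd]
  rfl

theorem hasDerivAt_inner_sub_of_gradient_eq (hF : DifferentiableAt ℝ (uncurry F) (s, c s))
    (hc : HasDerivAt c c' s) (hgrad : gradient (F s) (c s) = x) :
    HasDerivAt (fun r => inner ℝ x (c r) - F r (c r))
      (-fderiv ℝ (uncurry F) (s, c s) (1, 0)) s := by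
  have hinner : HasDerivAt (fun r => inner ℝ x (c r)) (inner ℝ x c') s := by
    simpa using (hasDerivAt_const s x).inner ℝ hc
  have h := hinner.sub (hF.hasFDerivAt.hasDerivAt_comp_prodMk hc)
  have hsplit : ((1 : ℝ), c') = (1, 0) + (0, c') := by simp
  rw [hsplit, map_add, fderiv_uncurry_apply_inr_of_gradient_eq hF hgrad] at h
  exact h.congr_deriv (by ring)

variable {B : ℝ × E →L[ℝ] ℝ × E →L[ℝ] ℝ}

theorem hasDerivAt_deriv_inner_sub_of_gradient_eq
    (hF : ∀ᶠ r in 𝓝 s, DifferentiableAt ℝ (uncurry F) (r, c r))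
    (hc : ∀ᶠ r in 𝓝 s, DifferentiableAt ℝ c r)
    (hgrad : ∀ᶠ r in 𝓝 s, gradient (F r) (c r) = x)
    (hB : HasFDerivAt (fderiv ℝ (uncurry F)) B (s, c s)) (hc' : HasDerivAt c c' s) :
    HasDerivAt (fun r => deriv (fun q => inner ℝ x (c q) - F q (c q)) r) (-B (1, c') (1, 0)) s := by
  have h₁ : HasDerivAt (fun r => fderiv ℝ (uncurry F) (r, c r)) (B (1, c')) s :=
    HasFDerivAt.hasDerivAt_comp_prodMk (φ := fderiv ℝ (uncurry F)) hB hc'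
  have h := (h₁.clm_apply (hasDerivAt_const s ((1, 0) : ℝ × E))).neg
  rw [map_zero, add_zero] at h
  refine h.congr_of_eventuallyEq ?_
  filter_upwards [hF, hc, hgrad] with r hFr hcr hgradr using
    (hasDerivAt_inner_sub_of_gradient_eq hFr hcr.hasDerivAt hgradr).deriv

theorem second_deriv_apply_inr_eq_zero_of_gradient_eq
    (hF : ∀ᶠ r in 𝓝 s, DifferentiableAt ℝ (uncurry F) (r, c r))
    (hgrad : ∀ᶠ r in 𝓝 s, gradient (F r) (c r) = x)
    (hB : HasFDerivAt (fderiv ℝ (uncurry F)) B (s, c s)) (hc' : HasDerivAt c c' s) (v : E) :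
    B (1, c') (0, v) = 0 := by
  have h₁ : HasDerivAt (fun r => fderiv ℝ (uncurry F) (r, c r)) (B (1, c')) s :=
    HasFDerivAt.hasDerivAt_comp_prodMk (φ := fderiv ℝ (uncurry F)) hB hc'
  have h := h₁.clm_apply (hasDerivAt_const s ((0, v) : ℝ × E))
  rw [map_zero, add_zero] at h
  have hconst : (fun r => fderiv ℝ (uncurry F) (r, c r) (0, v)) =ᶠ[𝓝 s] fun _ => inner ℝ x v := by
    filter_upwards [hF, hgrad] with r hFr hgradr using
      fderiv_uncurry_apply_inr_of_gradient_eq hFr hgradr v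
  exact h.unique ((hasDerivAt_const s _).congr_of_eventuallyEq hconst)

end Legendre

section SchurComplement

variable {ι : Type*} [Fintype ι] [DecidableEq ι]

theorem inv_mulVec_dotProduct_eq_of_mulVec_eq_neg {H : Matrix ι ι ℝ} (hH : IsUnit H)
    {w v : ι → ℝ} (hw : H *ᵥ w = -v) : (H⁻¹ *ᵥ v) ⬝ᵥ v = -(w ⬝ᵥ v) := by
  have hinv : H⁻¹ *ᵥ v = -w := by
    rw [← neg_neg v, ← hw, mulVec_neg, mulVec_mulVec,
      nonsing_inv_mul H ((isUnit_iff_isUnit_det H).mp hH), one_mulVec]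
  rw [hinv, neg_dotProduct]

theorem apply_eq_sub_inv_mulVec_dotProduct
    {B : ℝ × EuclideanSpace ℝ ι →L[ℝ] ℝ × EuclideanSpace ℝ ι →L[ℝ] ℝ}
    (hB : ∀ a b, B a b = B b a) {w : EuclideanSpace ℝ ι} (hw : ∀ v, B (1, w) (0, v) = 0)
    (hH : IsUnit (Matrix.of fun i j =>
      B (0, EuclideanSpace.single j 1) (0, EuclideanSpace.single i 1))) :
    B (1, w) (1, 0) = B (1, 0) (1, 0) -
      ((Matrix.of fun i j => B (0, EuclideanSpace.single j 1) (0, EuclideanSpace.single i 1))⁻¹ *ᵥ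
          fun i => B (0, EuclideanSpace.single i 1) (1, 0)) ⬝ᵥ
        fun i => B (0, EuclideanSpace.single i 1) (1, 0) := by
  set v : ι → ℝ := fun i => B (0, EuclideanSpace.single i 1) (1, 0)
  have hexpand : ∀ a, B (0, w) a = ∑ j, B (0, EuclideanSpace.single j 1) a * w j := by
    intro a
    simpa [mul_comm] using
      congrArg (· a) (EuclideanSpace.map_eq_sum ((B.comp (inr ℝ ℝ _)).toLinearMap) w)
  have hsplit : ((1 : ℝ), w) = (1, 0) + (0, w) := by simp
  have hHw : (Matrix.of fun i j => B (0, EuclideanSpace.single j 1) (0, EuclideanSpace.single i 1))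
      *ᵥ w = -v := by
    funext i
    have h := hw (EuclideanSpace.single i 1)
    rw [hsplit, map_add, _root_.add_apply, hB, hexpand] at h
    simp only [mulVec, dotProduct, of_apply, Pi.neg_apply, v]
    linarith
  rw [inv_mulVec_dotProduct_eq_of_mulVec_eq_neg hH hHw, hsplit, map_add, _root_.add_apply, hexpand]
  simp [dotProduct, v, mul_comm]

end SchurComplement

theorem legendre_second_time_deriv_general {n : ℕ}
    (Ω P : Set (EuclideanSpace ℝ (Fin n))) (hΩ : IsOpen Ω) (hP : IsOpen P)
    (F : ℝ → EuclideanSpace ℝ (Fin n) → ℝ)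
    (ξ : ℝ → EuclideanSpace ℝ (Fin n) → EuclideanSpace ℝ (Fin n))
    (hF : ContDiffOn ℝ 2 (fun p : ℝ × EuclideanSpace ℝ (Fin n) => F p.1 p.2)
      (Set.univ ×ˢ Ω))
    (hξmem : ∀ t : ℝ, ∀ x ∈ P, ξ t x ∈ Ω)
    (hξright : ∀ t : ℝ, ∀ x ∈ P, gradient (F t) (ξ t x) = x)
    (hξC1 : ContDiffOn ℝ 1
      (fun p : ℝ × EuclideanSpace ℝ (Fin n) => ξ p.1 p.2) (Set.univ ×ˢ P))
    (hHessInv : ∀ t : ℝ, ∀ y ∈ Ω, IsUnit (hessMat (F t) y))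
    (u : ℝ → EuclideanSpace ℝ (Fin n) → ℝ)
    (hu : ∀ t x, u t x = (inner ℝ x (ξ t x) : ℝ) - F t (ξ t x)) :
    ∀ t : ℝ, ∀ x ∈ P,
      -(deriv (fun s => deriv (fun r => u r x) s) t) =
        deriv (fun s => deriv (fun r => F r (ξ t x)) s) t -
          (((hessMat (F t) (ξ t x))⁻¹ *ᵥ
              (fun i => gradient (fun z => deriv (fun s => F s z) t) (ξ t x) i)) ⬝ᵥ
            (fun i => gradient (fun z => deriv (fun s => F s z) t) (ξ t x) i)) := by
  intro t x hx
  have hF₂ : ∀ q ∈ univ ×ˢ Ω, ContDiffAt ℝ 2 (uncurry F) q := fun q hq =>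
    hF.contDiffAt ((isOpen_univ.prod hΩ).mem_nhds hq)
  have hFd : ∀ q ∈ univ ×ˢ Ω, DifferentiableAt ℝ (uncurry F) q := fun q hq =>
    (hF₂ q hq).differentiableAt two_ne_zero
  have hξd : ∀ s, DifferentiableAt ℝ (fun r => ξ r x) s := fun s =>
    ((hξC1.contDiffAt ((isOpen_univ.prod hP).mem_nhds ⟨trivial, hx⟩)).differentiableAt
      one_ne_zero).comp s (differentiableAt_id.prodMk (differentiableAt_const x))
  have hcurve : ∀ s, DifferentiableAt ℝ (uncurry F) (s, ξ s x) := fun s =>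
    hFd _ ⟨trivial, hξmem s x hx⟩
  have hgradξ : ∀ s, gradient (F s) (ξ s x) = x := fun s => hξright s x hx
  set y := ξ t x
  have hy : y ∈ Ω := hξmem t x hx
  have hslice : ∀ᶠ z in 𝓝 y, DifferentiableAt ℝ (uncurry F) (t, z) := by
    filter_upwards [hΩ.mem_nhds hy] with z hz using hFd _ ⟨trivial, hz⟩
  have hB := (((hF₂ (t, y) ⟨trivial, hy⟩).fderiv_right le_rfl).differentiableAt
    one_ne_zero).hasFDerivAt
  have hHess := hessMat_slice_snd hslice hB
  simp_rw [hu]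
  rw [(hasDerivAt_deriv_inner_sub_of_gradient_eq (.of_forall hcurve) (.of_forall hξd)
      (.of_forall hgradξ) hB (hξd t).hasDerivAt).deriv, neg_neg,
    (hasDerivAt_deriv_slice_fst (.of_forall fun s => hFd (s, y) ⟨trivial, hy⟩) hB).deriv,
    funext (gradient_deriv_slice_fst_apply hslice hB), hHess]
  exact apply_eq_sub_inv_mulVec_dotProduct
    ((hF₂ (t, y) ⟨trivial, hy⟩).isSymmSndFDerivAt (by simp))
    (second_deriv_apply_inr_eq_zero_of_gradient_eq (.of_forall hcurve) (.of_forall hgradξ) hB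
      (hξd t).hasDerivAt)
    (hHess ▸ hHessInv t y hy)

/-- Second time derivative of the time-dependent Legendre transform:
`-∂²u/∂t²(t,x) = ∂²F/∂t²(t,ξ) - ⟨(Hess_ξ F(t,ξ))⁻¹ ∇_ξ(∂F/∂t)(t,ξ), ∇_ξ(∂F/∂t)(t,ξ)⟩`
at `ξ = ξ(t,x)`. -/
theorem legendre_second_time_deriv {n : ℕ}
    (Ω P : Set (EuclideanSpace ℝ (Fin n))) (hΩ : IsOpen Ω) (hP : IsOpen P)
    (F : ℝ → EuclideanSpace ℝ (Fin n) → ℝ)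
    (ξ : ℝ → EuclideanSpace ℝ (Fin n) → EuclideanSpace ℝ (Fin n))
    (hF : ContDiffOn ℝ 2 (fun p : ℝ × EuclideanSpace ℝ (Fin n) => F p.1 p.2)
      (Set.univ ×ˢ Ω))
    (hbij : ∀ t : ℝ, Set.BijOn (fun y => gradient (F t) y) Ω P)
    (hξmem : ∀ t : ℝ, ∀ x ∈ P, ξ t x ∈ Ω)
    (hξright : ∀ t : ℝ, ∀ x ∈ P, gradient (F t) (ξ t x) = x)
    (hξleft : ∀ t : ℝ, ∀ y ∈ Ω, ξ t (gradient (F t) y) = y)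
    (hξC1 : ContDiffOn ℝ 1
      (fun p : ℝ × EuclideanSpace ℝ (Fin n) => ξ p.1 p.2) (Set.univ ×ˢ P))
    (hHessInv : ∀ t : ℝ, ∀ y ∈ Ω, IsUnit (hessMat (F t) y))
    (u : ℝ → EuclideanSpace ℝ (Fin n) → ℝ)
    (hu : ∀ t x, u t x = (inner ℝ x (ξ t x) : ℝ) - F t (ξ t x)) :
    ∀ t : ℝ, ∀ x ∈ P,
      -(deriv (fun s => deriv (fun r => u r x) s) t) =
        deriv (fun s => deriv (fun r => F r (ξ t x)) s) t -
          (((hessMat (F t) (ξ t x))⁻¹ *ᵥ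
              (fun i => gradient (fun z => deriv (fun s => F s z) t) (ξ t x) i)) ⬝ᵥ
            (fun i => gradient (fun z => deriv (fun s => F s z) t) (ξ t x) i)) :=
  legendre_second_time_deriv_general Ω P hΩ hP F ξ hF hξmem hξright hξC1 hHessInv u hu
end

section
/- Let Ω ⊆ ℝⁿ be open, let F : ℝ × Ω → ℝ be C², and suppose that for each t the map ξ ↦ ∇_ξ F(t, ξ) is a bijection from Ω onto an open set P ⊆ ℝⁿ, with inverse x ↦ ξ(t,x) jointly C¹, and that Hess_ξ F(t, ξ) is invertible for all (t, ξ). Define u(t, x) = ⟨x, ξ(t,x)⟩ − F(t, ξ(t,x)) on ℝ × P. Then ∂²u/∂t² vanishes identically on ℝ × P if and only if for all (t, ξ) ∈ ℝ × Ω, ∂²F/∂t²(t, ξ) = ⟨(Hess_ξ F(t, ξ))⁻¹ ∇_ξ(∂F/∂t)(t, ξ), ∇_ξ(∂F/∂t)(t, ξ)⟩. -/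
/-!
Fix `x ∈ P` and write `y(t) = ξ(t, x)`. Since `∇_y F(t, y(t)) = x`, the envelope theorem gives
`∂_t u(t, x) = -∂_t F(t, y(t))`, so `∂²_t u = -∂²_t F - ⟨∇_y ∂_t F, ẏ⟩` at `(t, y(t))`.
Differentiating `∇_y F(t, y(t)) = x` in `t` and using the symmetry of second derivatives gives
`Hess_y F · ẏ = -∇_y ∂_t F`, hence
`∂²_t u(t, x) = ⟨(Hess_y F)⁻¹ ∇_y ∂_t F, ∇_y ∂_t F⟩ - ∂²_t F` at `(t, y(t))`.
As `ξ(t, ·)` is a bijection `P → Ω`, `∂²_t u` vanishes on `ℝ × P` iff the geodesic equation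
holds on `ℝ × Ω`.
-/

open Set Matrix

open Function InnerProductSpace Topology
open scoped RealInnerProductSpace

section
variable {G H : Type*} [NormedAddCommGroup G] [NormedSpace ℝ G]
  [NormedAddCommGroup H] [NormedSpace ℝ H] {f : G → H} {p : G}

theorem ContDiffAt.eventually_differentiableAt (hf : ContDiffAt ℝ 2 f p) :
    ∀ᶠ q in 𝓝 p, DifferentiableAt ℝ f q :=
  (hf.eventually (by simp)).mono fun _ hq => hq.differentiableAt two_ne_zero

theorem ContDiffAt.hasFDerivAt_fderiv (hf : ContDiffAt ℝ 2 f p) :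
    HasFDerivAt (fderiv ℝ f) (fderiv ℝ (fderiv ℝ f) p) p :=
  ((hf.fderiv_right (m := 1) (by norm_num)).differentiableAt one_ne_zero).hasFDerivAt

theorem ContDiffAt.hasDerivAt_fderiv_comp_apply {c : ℝ → G} {c' : G} {t : ℝ}
    (hf : ContDiffAt ℝ 2 f (c t)) (hc : HasDerivAt c c' t) (w : G) :
    HasDerivAt (fun s => fderiv ℝ f (c s) w) (fderiv ℝ (fderiv ℝ f) (c t) c' w) t :=
  (ContinuousLinearMap.apply ℝ H w).hasFDerivAt.comp_hasDerivAt t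
    (hf.hasFDerivAt_fderiv.comp_hasDerivAt t hc)

end

section
variable {E : Type*} [NormedAddCommGroup E] [NormedSpace ℝ E] {F : ℝ → E → ℝ} {t : ℝ} {y : E}

theorem hasDerivAt_slice_fst (h : DifferentiableAt ℝ (uncurry F) (t, y)) :
    HasDerivAt (fun s => F s y) (fderiv ℝ (uncurry F) (t, y) (1, 0)) t :=
  HasFDerivAt.comp_hasDerivAt (f := fun s => (s, y)) t h.hasFDerivAt
    ((hasDerivAt_id t).prodMk (hasDerivAt_const t y))

theorem hasFDerivAt_slice_snd (h : DifferentiableAt ℝ (uncurry F) (t, y)) :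
    HasFDerivAt (F t) ((fderiv ℝ (uncurry F) (t, y)).comp (.inr ℝ ℝ E)) y :=
  h.hasFDerivAt.comp y (hasFDerivAt_prodMk_right t y)

theorem deriv_deriv_slice_fst (hF : ContDiffAt ℝ 2 (uncurry F) (t, y)) :
    deriv (fun s => deriv (fun r => F r y) s) t =
      fderiv ℝ (fderiv ℝ (uncurry F)) (t, y) (1, 0) (1, 0) := by
  have hcurve : HasDerivAt (fun s => (s, y)) ((1 : ℝ), (0 : E)) t :=
    (hasDerivAt_id t).prodMk (hasDerivAt_const t y)
  have hslice : (fun s => deriv (fun r => F r y) s) =ᶠ[𝓝 t]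
      fun s => fderiv ℝ (uncurry F) (s, y) (1, 0) :=
    (hcurve.continuousAt.eventually hF.eventually_differentiableAt).mono
      fun s hs => (hasDerivAt_slice_fst hs).deriv
  rw [hslice.deriv_eq]
  exact (hF.hasDerivAt_fderiv_comp_apply hcurve _).deriv

end

section
variable {E : Type*} [NormedAddCommGroup E] [InnerProductSpace ℝ E] [CompleteSpace E]

theorem inner_gradient_apply_of_hasFDerivAt {f : E → ℝ} {f' : E →L[ℝ] ℝ} {y : E}
    (h : HasFDerivAt f f' y) (v : E) : ⟪gradient f y, v⟫ = f' v := by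
  rw [gradient, h.fderiv, toDual_symm_apply]

theorem inner_fderiv_gradient_apply (f : E → ℝ) (y v w : E) :
    ⟪fderiv ℝ (gradient f) y v, w⟫ = fderiv ℝ (fderiv ℝ f) y v w := by
  have : gradient f = (toDual ℝ E).symm ∘ fderiv ℝ f := rfl
  rw [this, LinearIsometryEquiv.comp_fderiv]
  exact toDual_symm_apply

variable {F : ℝ → E → ℝ} {t : ℝ} {y : E}

theorem inner_gradient_slice_snd (h : DifferentiableAt ℝ (uncurry F) (t, y)) (v : E) :
    ⟪gradient (F t) y, v⟫ = fderiv ℝ (uncurry F) (t, y) (0, v) :=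
  inner_gradient_apply_of_hasFDerivAt (hasFDerivAt_slice_snd h) v

theorem inner_gradient_deriv_slice_fst (hF : ContDiffAt ℝ 2 (uncurry F) (t, y)) (v : E) :
    ⟪gradient (fun z => deriv (fun s => F s z) t) y, v⟫ =
      fderiv ℝ (fderiv ℝ (uncurry F)) (t, y) (0, v) (1, 0) := by
  have hslice : (fun z => deriv (fun s => F s z) t) =ᶠ[𝓝 y]
      fun z => fderiv ℝ (uncurry F) (t, z) (1, 0) :=
    ((continuous_const.prodMk continuous_id).continuousAt.eventually
      hF.eventually_differentiableAt).mono fun z hz => (hasDerivAt_slice_fst hz).deriv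
  rw [hslice.gradient_eq]
  exact inner_gradient_apply_of_hasFDerivAt
    ((ContinuousLinearMap.apply ℝ ℝ ((1 : ℝ), (0 : E))).hasFDerivAt.comp y
      (hF.hasFDerivAt_fderiv.comp y (hasFDerivAt_prodMk_right t y))) v

theorem inner_fderiv_gradient_slice_snd (hF : ContDiffAt ℝ 2 (uncurry F) (t, y)) (v w : E) :
    ⟪fderiv ℝ (gradient (F t)) y v, w⟫ =
      fderiv ℝ (fderiv ℝ (uncurry F)) (t, y) (0, v) (0, w) := by
  rw [inner_fderiv_gradient_apply]
  have hslice : fderiv ℝ (F t) =ᶠ[𝓝 y]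
      fun z => (fderiv ℝ (uncurry F) (t, z)).comp (.inr ℝ ℝ E) :=
    ((continuous_const.prodMk continuous_id).continuousAt.eventually
      hF.eventually_differentiableAt).mono fun z hz => (hasFDerivAt_slice_snd hz).fderiv
  have hderiv : HasFDerivAt (fun z => fderiv ℝ (uncurry F) (t, z))
      ((fderiv ℝ (fderiv ℝ (uncurry F)) (t, y)).comp (.inr ℝ ℝ E)) y :=
    hF.hasFDerivAt_fderiv.comp y (hasFDerivAt_prodMk_right t y)
  rw [hslice.fderiv_eq, (hderiv.clm_comp (hasFDerivAt_const (.inr ℝ ℝ E) y)).fderiv]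
  simp

variable {ξ : ℝ → E} {x : E}

theorem hasDerivAt_legendre {s : ℝ} (hF : DifferentiableAt ℝ (uncurry F) (s, ξ s))
    (hξ : DifferentiableAt ℝ ξ s) (hgrad : gradient (F s) (ξ s) = x) :
    HasDerivAt (fun r => ⟪x, ξ r⟫ - F r (ξ r)) (-fderiv ℝ (uncurry F) (s, ξ s) (1, 0)) s := by
  have hcomp : HasDerivAt (fun r => F r (ξ r))
      (fderiv ℝ (uncurry F) (s, ξ s) (1, deriv ξ s)) s :=
    HasFDerivAt.comp_hasDerivAt (f := fun r => (r, ξ r)) s hF.hasFDerivAt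
      ((hasDerivAt_id s).prodMk hξ.hasDerivAt)
  have hsplit : fderiv ℝ (uncurry F) (s, ξ s) (1, deriv ξ s) =
      fderiv ℝ (uncurry F) (s, ξ s) (1, 0) + ⟪x, deriv ξ s⟫ := by
    rw [← hgrad, inner_gradient_slice_snd hF, ← map_add, Prod.mk_add_mk, add_zero, zero_add]
  refine (((hasDerivAt_const s x).inner ℝ hξ.hasDerivAt).sub hcomp).congr_deriv ?_
  rw [hsplit]
  simp

theorem deriv_deriv_legendre (hF : ∀ s, ContDiffAt ℝ 2 (uncurry F) (s, ξ s))
    (hξ : Differentiable ℝ ξ) (hgrad : ∀ s, gradient (F s) (ξ s) = x) (t : ℝ) :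
    deriv (fun s => deriv (fun r => ⟪x, ξ r⟫ - F r (ξ r)) s) t =
      -deriv (fun s => deriv (fun r => F r (ξ t)) s) t -
        ⟪gradient (fun z => deriv (fun s => F s z) t) (ξ t), deriv ξ t⟫ := by
  have hcurve : HasDerivAt (fun s => (s, ξ s)) ((1 : ℝ), deriv ξ t) t :=
    (hasDerivAt_id t).prodMk (hξ t).hasDerivAt
  have hfirst : (fun s => deriv (fun r => ⟪x, ξ r⟫ - F r (ξ r)) s) =
      fun s => -fderiv ℝ (uncurry F) (s, ξ s) (1, 0) :=
    funext fun s =>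
      (hasDerivAt_legendre ((hF s).differentiableAt two_ne_zero) (hξ s) (hgrad s)).deriv
  have hsplit : ((1 : ℝ), deriv ξ t) = (1, 0) + (0, deriv ξ t) := by simp
  rw [hfirst, ((hF t).hasDerivAt_fderiv_comp_apply hcurve _).fun_neg.deriv, hsplit, map_add,
    _root_.add_apply, deriv_deriv_slice_fst (hF t), inner_gradient_deriv_slice_fst (hF t)]
  ring

theorem fderiv_gradient_apply_deriv_legendre (hF : ∀ s, ContDiffAt ℝ 2 (uncurry F) (s, ξ s))
    (hξ : Differentiable ℝ ξ) (hgrad : ∀ s, gradient (F s) (ξ s) = x) (t : ℝ) :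
    fderiv ℝ (gradient (F t)) (ξ t) (deriv ξ t) =
      -gradient (fun z => deriv (fun s => F s z) t) (ξ t) := by
  refine ext_inner_right ℝ fun w => ?_
  have hcurve : HasDerivAt (fun s => (s, ξ s)) ((1 : ℝ), deriv ξ t) t :=
    (hasDerivAt_id t).prodMk (hξ t).hasDerivAt
  have hconst : (fun s => fderiv ℝ (uncurry F) (s, ξ s) (0, w)) = fun _ => ⟪x, w⟫ :=
    funext fun s => by
      rw [← inner_gradient_slice_snd ((hF s).differentiableAt two_ne_zero), hgrad s]
  have hzero : fderiv ℝ (fderiv ℝ (uncurry F)) (t, ξ t) (1, deriv ξ t) (0, w) = 0 := by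
    have h := (hF t).hasDerivAt_fderiv_comp_apply hcurve (0, w)
    rw [hconst] at h
    exact h.unique (hasDerivAt_const t _)
  have hsplit : ((1 : ℝ), deriv ξ t) = (1, 0) + (0, deriv ξ t) := by simp
  rw [hsplit, map_add, _root_.add_apply, (hF t).isSymmSndFDerivAt (by simp)] at hzero
  rw [inner_fderiv_gradient_slice_snd (hF t), inner_neg_left,
    inner_gradient_deriv_slice_fst (hF t)]
  linarith

end

theorem hessMat_mulVec {n : ℕ} (f : EuclideanSpace ℝ (Fin n) → ℝ)
    (y v : EuclideanSpace ℝ (Fin n)) : hessMat f y *ᵥ v = fderiv ℝ (gradient f) y v := by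
  set b := (EuclideanSpace.basisFun (Fin n) ℝ).toBasis
  have hrepr : ∀ w : EuclideanSpace ℝ (Fin n), ⇑(b.repr w) = w := fun w => by
    ext i
    simp [b]
  have hmat : LinearMap.toMatrix b b (fderiv ℝ (gradient f) y : _ →ₗ[ℝ] _) = hessMat f y := by
    ext i j
    simp [b, LinearMap.toMatrix_apply, hessMat]
  simpa only [hrepr, hmat, ContinuousLinearMap.coe_coe] using
    LinearMap.toMatrix_mulVec_repr b b (fderiv ℝ (gradient f) y : _ →ₗ[ℝ] _) v

theorem deriv_deriv_legendre_eq_hessMat_inv {n : ℕ} {F : ℝ → EuclideanSpace ℝ (Fin n) → ℝ}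
    {ξ : ℝ → EuclideanSpace ℝ (Fin n)} {x : EuclideanSpace ℝ (Fin n)}
    (hF : ∀ s, ContDiffAt ℝ 2 (uncurry F) (s, ξ s)) (hξ : Differentiable ℝ ξ)
    (hgrad : ∀ s, gradient (F s) (ξ s) = x) {t : ℝ} (hHess : IsUnit (hessMat (F t) (ξ t))) :
    deriv (fun s => deriv (fun r => ⟪x, ξ r⟫ - F r (ξ r)) s) t =
      ((hessMat (F t) (ξ t))⁻¹ *ᵥ
          (fun i => gradient (fun z => deriv (fun s => F s z) t) (ξ t) i)) ⬝ᵥ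
        (fun i => gradient (fun z => deriv (fun s => F s z) t) (ξ t) i) -
      deriv (fun s => deriv (fun r => F r (ξ t)) s) t := by
  have := hHess.invertible
  have hinv : (hessMat (F t) (ξ t))⁻¹ *ᵥ
      (fun i => gradient (fun z => deriv (fun s => F s z) t) (ξ t) i) = -deriv ξ t := by
    refine inv_mulVec_eq_vec ?_
    rw [mulVec_neg, hessMat_mulVec, fderiv_gradient_apply_deriv_legendre hF hξ hgrad t,
      WithLp.ofLp_neg, neg_neg]
  rw [deriv_deriv_legendre hF hξ hgrad t, hinv, neg_dotProduct,
    EuclideanSpace.inner_eq_star_dotProduct, star_trivial]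
  ring

/-- Under the Legendre transform, the toric `L²` geodesic equation
`∂²F/∂t² = ⟨(Hess_ξ F)⁻¹ ∇_ξ(∂F/∂t), ∇_ξ(∂F/∂t)⟩` on `ℝ × Ω` is equivalent to
`∂²u/∂t² ≡ 0` on `ℝ × P`, i.e. `L²` geodesics are segments of symplectic potentials. -/
theorem legendre_geodesic_iff_affine {n : ℕ}
    (Ω P : Set (EuclideanSpace ℝ (Fin n))) (hΩ : IsOpen Ω) (hP : IsOpen P)
    (F : ℝ → EuclideanSpace ℝ (Fin n) → ℝ)
    (ξ : ℝ → EuclideanSpace ℝ (Fin n) → EuclideanSpace ℝ (Fin n))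
    (hF : ContDiffOn ℝ 2 (fun p : ℝ × EuclideanSpace ℝ (Fin n) => F p.1 p.2)
      (Set.univ ×ˢ Ω))
    (hbij : ∀ t : ℝ, Set.BijOn (fun y => gradient (F t) y) Ω P)
    (hξmem : ∀ t : ℝ, ∀ x ∈ P, ξ t x ∈ Ω)
    (hξright : ∀ t : ℝ, ∀ x ∈ P, gradient (F t) (ξ t x) = x)
    (hξleft : ∀ t : ℝ, ∀ y ∈ Ω, ξ t (gradient (F t) y) = y)
    (hξC1 : ContDiffOn ℝ 1
      (fun p : ℝ × EuclideanSpace ℝ (Fin n) => ξ p.1 p.2) (Set.univ ×ˢ P))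
    (hHessInv : ∀ t : ℝ, ∀ y ∈ Ω, IsUnit (hessMat (F t) y))
    (u : ℝ → EuclideanSpace ℝ (Fin n) → ℝ)
    (hu : ∀ t x, u t x = (inner ℝ x (ξ t x) : ℝ) - F t (ξ t x)) :
    (∀ t : ℝ, ∀ x ∈ P, deriv (fun s => deriv (fun r => u r x) s) t = 0) ↔
      (∀ t : ℝ, ∀ y ∈ Ω,
        deriv (fun s => deriv (fun r => F r y) s) t =
          (((hessMat (F t) y)⁻¹ *ᵥ
              (fun i => gradient (fun z => deriv (fun s => F s z) t) y i)) ⬝ᵥ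
            (fun i => gradient (fun z => deriv (fun s => F s z) t) y i))) := by
  have hFat : ∀ s, ∀ y ∈ Ω, ContDiffAt ℝ 2 (uncurry F) (s, y) := fun s y hy =>
    hF.contDiffAt ((isOpen_univ.prod hΩ).mem_nhds ⟨trivial, hy⟩)
  have hξdiff : ∀ x ∈ P, Differentiable ℝ (fun s => ξ s x) := fun x hx s =>
    DifferentiableAt.comp (g := uncurry ξ) (f := fun s => (s, x)) s
      ((hξC1.differentiableOn one_ne_zero).differentiableAt
        ((isOpen_univ.prod hP).mem_nhds ⟨trivial, hx⟩))
      (differentiableAt_id.prodMk (differentiableAt_const x))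
  have hu_tt : ∀ t, ∀ x ∈ P, deriv (fun s => deriv (fun r => u r x) s) t =
      ((hessMat (F t) (ξ t x))⁻¹ *ᵥ
          (fun i => gradient (fun z => deriv (fun s => F s z) t) (ξ t x) i)) ⬝ᵥ
        (fun i => gradient (fun z => deriv (fun s => F s z) t) (ξ t x) i) -
      deriv (fun s => deriv (fun r => F r (ξ t x)) s) t := fun t x hx => by
    simp only [hu]
    exact deriv_deriv_legendre_eq_hessMat_inv (fun s => hFat s _ (hξmem s x hx)) (hξdiff x hx)
      (fun s => hξright s x hx) (hHessInv t _ (hξmem t x hx))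
  constructor
  · intro h t y hy
    have hx := (hbij t).mapsTo hy
    have hy_tt := hu_tt t _ hx
    rw [hξleft t y hy, h t _ hx] at hy_tt
    linarith
  · intro h t x hx
    rw [hu_tt t x hx, h t _ (hξmem t x hx), sub_self]
end
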